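/- If ψ_α, φ_α (α=1,2) satisfy ∂ψ₁/∂z = pφ₁, ∂φ₁/∂z̄ = p̄ψ₁ and ∂ψ₂/∂z = p̄φ₂, ∂φ₂/∂z̄ = pψ₂, then ∂(ψ₁ψ₂)/∂z = ∂(φ₁φ₂)/∂z̄ and ∂(ψ₁φ̄₂)/∂z = ∂(φ₁ψ̄₂)/∂z̄; consequently the 1-forms defining the ℝ^{2,2} Weierstrass representation (e.g. φ₁φ₂ dz + ψ₁ψ₂ dz̄) are closed. -/

import Mathlib

open Complex

/-- Partial derivative in the x-direction. -/
noncomputable def dX (f : ℝ × ℝ → ℂ) (w : ℝ × ℝ) : ℂ := fderiv ℝ f w (1, 0)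

/-- Partial derivative in the y-direction. -/
noncomputable def dY (f : ℝ × ℝ → ℂ) (w : ℝ × ℝ) : ℂ := fderiv ℝ f w (0, 1)

/-- Wirtinger derivative ∂/∂z = (∂ₓ - i ∂_y)/2. -/
noncomputable def Wz (f : ℝ × ℝ → ℂ) : ℝ × ℝ → ℂ := fun w => (dX f w - Complex.I * dY f w) / 2

/-- Wirtinger derivative ∂/∂z̄ = (∂ₓ + i ∂_y)/2. -/
noncomputable def Wzb (f : ℝ × ℝ → ℂ) : ℝ × ℝ → ℂ := fun w => (dX f w + Complex.I * dY f w) / 2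

lemma dX_mul (f g : ℝ × ℝ → ℂ) (hf : Differentiable ℝ f) (hg : Differentiable ℝ g)
    (w : ℝ × ℝ) : dX (fun v => f v * g v) w = dX f w * g w + f w * dX g w := by
  unfold dX; rw [fderiv_fun_mul (hf w) (hg w)]; simp; ring

lemma dY_mul (f g : ℝ × ℝ → ℂ) (hf : Differentiable ℝ f) (hg : Differentiable ℝ g)
    (w : ℝ × ℝ) : dY (fun v => f v * g v) w = dY f w * g w + f w * dY g w := by
  unfold dY; rw [fderiv_fun_mul (hf w) (hg w)]; simp; ring

lemma dX_conj (f : ℝ × ℝ → ℂ) (w : ℝ × ℝ) :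
    dX (fun v => (starRingEnd ℂ) (f v)) w = (starRingEnd ℂ) (dX f w) := by
  unfold dX
  rw [show (fun v => (starRingEnd ℂ) (f v)) = fun v => star (f v) from rfl, fderiv_star]
  simp

lemma dY_conj (f : ℝ × ℝ → ℂ) (w : ℝ × ℝ) :
    dY (fun v => (starRingEnd ℂ) (f v)) w = (starRingEnd ℂ) (dY f w) := by
  unfold dY
  rw [show (fun v => (starRingEnd ℂ) (f v)) = fun v => star (f v) from rfl, fderiv_star]
  simp

lemma Wz_mul (f g : ℝ × ℝ → ℂ) (hf : Differentiable ℝ f) (hg : Differentiable ℝ g)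
    (w : ℝ × ℝ) : Wz (fun v => f v * g v) w = Wz f w * g w + f w * Wz g w := by
  simp only [Wz, dX_mul f g hf hg, dY_mul f g hf hg]; ring

lemma Wzb_mul (f g : ℝ × ℝ → ℂ) (hf : Differentiable ℝ f) (hg : Differentiable ℝ g)
    (w : ℝ × ℝ) : Wzb (fun v => f v * g v) w = Wzb f w * g w + f w * Wzb g w := by
  simp only [Wzb, dX_mul f g hf hg, dY_mul f g hf hg]; ring

lemma Wz_conj (f : ℝ × ℝ → ℂ) (w : ℝ × ℝ) :
    Wz (fun v => (starRingEnd ℂ) (f v)) w = (starRingEnd ℂ) (Wzb f w) := by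
  simp only [Wz, Wzb, dX_conj, dY_conj, map_div₀, map_add, map_mul, Complex.conj_I,
    map_ofNat]
  ring

lemma Wzb_conj (f : ℝ × ℝ → ℂ) (w : ℝ × ℝ) :
    Wzb (fun v => (starRingEnd ℂ) (f v)) w = (starRingEnd ℂ) (Wz f w) := by
  simp only [Wz, Wzb, dX_conj, dY_conj, map_div₀, map_sub, map_mul, Complex.conj_I,
    map_ofNat]
  ring

theorem stmt_5 (ψ₁ φ₁ ψ₂ φ₂ p : ℝ × ℝ → ℂ)
    (hψ₁ : ContDiff ℝ (⊤ : ℕ∞) ψ₁) (hφ₁ : ContDiff ℝ (⊤ : ℕ∞) φ₁)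
    (hψ₂ : ContDiff ℝ (⊤ : ℕ∞) ψ₂) (hφ₂ : ContDiff ℝ (⊤ : ℕ∞) φ₂) (hp : ContDiff ℝ (⊤ : ℕ∞) p)
    (h1 : ∀ w, Wz ψ₁ w = p w * φ₁ w)
    (h2 : ∀ w, Wzb φ₁ w = (starRingEnd ℂ) (p w) * ψ₁ w)
    (h3 : ∀ w, Wz ψ₂ w = (starRingEnd ℂ) (p w) * φ₂ w)
    (h4 : ∀ w, Wzb φ₂ w = p w * ψ₂ w) :
    (∀ w, Wz (fun v => ψ₁ v * ψ₂ v) w = Wzb (fun v => φ₁ v * φ₂ v) w) ∧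
    (∀ w, Wz (fun v => ψ₁ v * (starRingEnd ℂ) (φ₂ v)) w
        = Wzb (fun v => φ₁ v * (starRingEnd ℂ) (ψ₂ v)) w) ∧
    -- closedness of A dz + B dz̄ with A = φ₁φ₂, B = ψ₁ψ₂ : ∂A/∂z̄ = ∂B/∂z
    (∀ w, Wzb (fun v => φ₁ v * φ₂ v) w = Wz (fun v => ψ₁ v * ψ₂ v) w) := by
  have dψ₁ := hψ₁.differentiable (by simp)
  have dφ₁ := hφ₁.differentiable (by simp)
  have dψ₂ := hψ₂.differentiable (by simp)
  have dφ₂ := hφ₂.differentiable (by simp)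
  have dcφ₂ : Differentiable ℝ (fun v => (starRingEnd ℂ) (φ₂ v)) := dφ₂.star
  have dcψ₂ : Differentiable ℝ (fun v => (starRingEnd ℂ) (ψ₂ v)) := dψ₂.star
  have key1 : ∀ w, Wz (fun v => ψ₁ v * ψ₂ v) w = Wzb (fun v => φ₁ v * φ₂ v) w := by
    intro w
    rw [Wz_mul _ _ dψ₁ dψ₂, Wzb_mul _ _ dφ₁ dφ₂, h1, h3, h2, h4]
    ring
  refine ⟨key1, ?_, fun w => (key1 w).symm⟩
  intro w
  rw [Wz_mul _ _ dψ₁ dcφ₂, Wzb_mul _ _ dφ₁ dcψ₂, Wz_conj, Wzb_conj, h1, h2, h3, h4]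
  simp only [map_mul, Complex.conj_conj]
  ring
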